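/- arXiv:2506.06564 — 3 statements merged into one kernel-verified Lean document; each statement's English description precedes it below -/
import Mathlib

section
/- Let f : ℝⁿ → ℝⁿ and g : ℝⁿ → ℝⁿˣᵐ be locally Lipschitz, let V : ℝⁿ → ℝ be C¹ with μ‖x‖² ≤ V(x) ≤ ν‖x‖² for some 0 < μ ≤ ν, and let Q, S, R be continuous matrix-valued functions with R(x) positive definite. Suppose the dissipation inequality ∇V(x)ᵀ(f(x) + g(x)u) ≤ xᵀQ(x)x + 2xᵀS(x)u + uᵀR(x)u holds for all x, u, and Δ(x) := S(x)R(x)⁻¹S(x)ᵀ − Q(x) is positive definite for all x. Then with the feedback π(x) = −R(x)⁻¹S(x)ᵀx, the derivative of V along the closed-loop vector field satisfies ∇V(x)ᵀ(f(x) + g(x)π(x)) ≤ −xᵀΔ(x)x < 0 for all x ≠ 0. -/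
/-!
Completing the square in the input: for symmetric invertible `R`, the QSR supply rate
`xᵀQx + 2xᵀSu + uᵀRu` evaluated at `u = -R⁻¹Sᵀx` equals `-xᵀ(SR⁻¹Sᵀ - Q)x`.
Plugging this feedback into the dissipation inequality bounds the Lie derivative of `V`
by `-xᵀΔx`, which is negative off the origin because `Δ` is positive definite.
-/

open Matrix

namespace Matrix

variable {α : Type*} [CommRing α] {n m : Type*} [Fintype n] [Fintype m] [DecidableEq m]

def qsrSupplyRate (Q : Matrix n n α) (S : Matrix n m α) (R : Matrix m m α)
    (x : n → α) (u : m → α) : α :=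
  x ⬝ᵥ Q *ᵥ x + 2 * (x ⬝ᵥ S *ᵥ u) + u ⬝ᵥ R *ᵥ u

lemma dotProduct_mulVec_neg_inv_mul_transpose_mulVec (S : Matrix n m α) (R : Matrix m m α)
    (x : n → α) :
    x ⬝ᵥ S *ᵥ -((R⁻¹ * Sᵀ) *ᵥ x) = -(x ⬝ᵥ (S * R⁻¹ * Sᵀ) *ᵥ x) := by
  rw [mulVec_neg, dotProduct_neg, mulVec_mulVec, Matrix.mul_assoc]

lemma IsSymm.inv_mul_transpose_mulVec_dotProduct {R : Matrix m m α} (hR : R.IsSymm)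
    (hdet : IsUnit R.det) (S : Matrix n m α) (x : n → α) :
    ((R⁻¹ * Sᵀ) *ᵥ x) ⬝ᵥ R *ᵥ ((R⁻¹ * Sᵀ) *ᵥ x) = x ⬝ᵥ (S * R⁻¹ * Sᵀ) *ᵥ x := by
  have hgram : (R⁻¹ * Sᵀ)ᵀ * R * (R⁻¹ * Sᵀ) = S * R⁻¹ * Sᵀ := by
    rw [transpose_mul, transpose_transpose, hR.inv.eq, Matrix.mul_assoc,
      ← Matrix.mul_assoc R, mul_nonsing_inv R hdet, Matrix.one_mul, Matrix.mul_assoc]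
  rw [dotProduct_mulVec, vecMul_mulVec, ← dotProduct_mulVec, mulVec_mulVec, hgram]

lemma IsSymm.qsrSupplyRate_neg_inv_mul_transpose_mulVec {R : Matrix m m α} (hR : R.IsSymm)
    (hdet : IsUnit R.det) (Q : Matrix n n α) (S : Matrix n m α) (x : n → α) :
    qsrSupplyRate Q S R x (-((R⁻¹ * Sᵀ) *ᵥ x)) = -(x ⬝ᵥ (S * R⁻¹ * Sᵀ - Q) *ᵥ x) := by
  rw [qsrSupplyRate, dotProduct_mulVec_neg_inv_mul_transpose_mulVec, mulVec_neg,
    neg_dotProduct, dotProduct_neg, neg_neg, hR.inv_mul_transpose_mulVec_dotProduct hdet,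
    sub_mulVec, dotProduct_sub]
  ring

end Matrix

theorem stmt6_general {n m : ℕ}
    (f : (Fin n → ℝ) → (Fin n → ℝ))
    (g : (Fin n → ℝ) → Matrix (Fin n) (Fin m) ℝ)
    (V : (Fin n → ℝ) → ℝ)
    (Q : (Fin n → ℝ) → Matrix (Fin n) (Fin n) ℝ)
    (S : (Fin n → ℝ) → Matrix (Fin n) (Fin m) ℝ)
    (R : (Fin n → ℝ) → Matrix (Fin m) (Fin m) ℝ)
    (hR : ∀ x, (R x).PosDef)
    (hdissi : ∀ (x : Fin n → ℝ) (u : Fin m → ℝ),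
      fderiv ℝ V x (f x + g x *ᵥ u) ≤
        x ⬝ᵥ (Q x) *ᵥ x + 2 * (x ⬝ᵥ (S x) *ᵥ u) + u ⬝ᵥ (R x) *ᵥ u)
    (hΔ : ∀ x, (S x * (R x)⁻¹ * (S x)ᵀ - Q x).PosDef)
    (π : (Fin n → ℝ) → (Fin m → ℝ))
    (hπ : ∀ x, π x = -(((R x)⁻¹ * (S x)ᵀ) *ᵥ x)) :
    ∀ x : Fin n → ℝ,
      fderiv ℝ V x (f x + g x *ᵥ π x) ≤
        -(x ⬝ᵥ (S x * (R x)⁻¹ * (S x)ᵀ - Q x) *ᵥ x) ∧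
      (x ≠ 0 → -(x ⬝ᵥ (S x * (R x)⁻¹ * (S x)ᵀ - Q x) *ᵥ x) < 0) := by
  intro x
  have hRsymm : (R x).IsSymm := isHermitian_iff_isSymm.mp (hR x).isHermitian
  have hRdet : IsUnit (R x).det := isUnit_iff_ne_zero.mpr (hR x).det_pos.ne'
  refine ⟨?_, fun hx => ?_⟩
  · calc fderiv ℝ V x (f x + g x *ᵥ π x)
        ≤ qsrSupplyRate (Q x) (S x) (R x) x (π x) := hdissi x (π x)
      _ = _ := by rw [hπ, hRsymm.qsrSupplyRate_neg_inv_mul_transpose_mulVec hRdet]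
  · simpa using (hΔ x).dotProduct_mulVec_pos hx

/-- main stability theorem: under the dissipation inequality with
QSR supply rate, `R x ≻ 0` and `Δ x := S x (R x)⁻¹ (S x)ᵀ − Q x ≻ 0`, the
structured feedback `π x = −(R x)⁻¹(S x)ᵀ x` makes the Lie derivative of `V`
along the closed loop at most `−xᵀΔ(x)x`, which is negative for `x ≠ 0`. -/
theorem stmt6 {n m : ℕ}
    (f : (Fin n → ℝ) → (Fin n → ℝ))
    (g : (Fin n → ℝ) → Matrix (Fin n) (Fin m) ℝ)
    (hf : LocallyLipschitz f) (hg : LocallyLipschitz fun x i j => g x i j)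
    (V : (Fin n → ℝ) → ℝ) (hV : ContDiff ℝ 1 V)
    (μ ν : ℝ) (hμ : 0 < μ) (hμν : μ ≤ ν)
    (hVbound : ∀ x : Fin n → ℝ, μ * (x ⬝ᵥ x) ≤ V x ∧ V x ≤ ν * (x ⬝ᵥ x))
    (Q : (Fin n → ℝ) → Matrix (Fin n) (Fin n) ℝ) (hQc : Continuous fun x i j => Q x i j)
    (S : (Fin n → ℝ) → Matrix (Fin n) (Fin m) ℝ) (hSc : Continuous fun x i j => S x i j)
    (R : (Fin n → ℝ) → Matrix (Fin m) (Fin m) ℝ) (hRc : Continuous fun x i j => R x i j)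
    (hR : ∀ x, (R x).PosDef)
    (hdissi : ∀ (x : Fin n → ℝ) (u : Fin m → ℝ),
      fderiv ℝ V x (f x + g x *ᵥ u) ≤
        x ⬝ᵥ (Q x) *ᵥ x + 2 * (x ⬝ᵥ (S x) *ᵥ u) + u ⬝ᵥ (R x) *ᵥ u)
    (hΔ : ∀ x, (S x * (R x)⁻¹ * (S x)ᵀ - Q x).PosDef)
    (π : (Fin n → ℝ) → (Fin m → ℝ))
    (hπ : ∀ x, π x = -(((R x)⁻¹ * (S x)ᵀ) *ᵥ x)) :
    ∀ x : Fin n → ℝ,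
      fderiv ℝ V x (f x + g x *ᵥ π x) ≤
        -(x ⬝ᵥ (S x * (R x)⁻¹ * (S x)ᵀ - Q x) *ᵥ x) ∧
      (x ≠ 0 → -(x ⬝ᵥ (S x * (R x)⁻¹ * (S x)ᵀ - Q x) *ᵥ x) < 0) :=
  stmt6_general f g V Q S R hR hdissi hΔ π hπ
end

section
/- Under the hypotheses of the previous statement and additionally assuming Δ(x) ⪰ εI for some ε > 0 and continuity of all data, every maximal solution x(t) of the closed-loop system ẋ = f(x) + g(x)π(x) with π(x) = −R(x)⁻¹S(x)ᵀx satisfies V(x(t)) ≤ V(x(0)) − ε∫₀ᵗ ‖x(s)‖² ds, and hence ‖x(t)‖² ≤ (ν/μ)‖x(0)‖² for all t ≥ 0. -/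
open Matrix MeasureTheory

private lemma key_ineq' {n m : ℕ} (Q : Matrix (Fin n) (Fin n) ℝ) (S : Matrix (Fin n) (Fin m) ℝ)
    (R : Matrix (Fin m) (Fin m) ℝ) (hR : R.PosDef) (ε : ℝ)
    (hΔ : (S * R⁻¹ * Sᵀ - Q - ε • (1 : Matrix (Fin n) (Fin n) ℝ)).PosSemidef) (x : Fin n → ℝ) :
    x ⬝ᵥ Q *ᵥ x + 2 * (x ⬝ᵥ S *ᵥ (-((R⁻¹ * Sᵀ) *ᵥ x))) +
      (-((R⁻¹ * Sᵀ) *ᵥ x)) ⬝ᵥ R *ᵥ (-((R⁻¹ * Sᵀ) *ᵥ x)) ≤ -ε * (x ⬝ᵥ x) := by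
  have hdet : IsUnit R.det := isUnit_iff_ne_zero.mpr hR.det_pos.ne'
  have hRsym : Rᵀ = R := by
    have := hR.isHermitian
    rwa [Matrix.IsHermitian, conjTranspose_eq_transpose_of_trivial] at this
  have hMt : ((R⁻¹ * Sᵀ))ᵀ = S * R⁻¹ := by
    rw [transpose_mul, transpose_transpose, transpose_nonsing_inv, hRsym]
  have h2 : x ⬝ᵥ S *ᵥ (-((R⁻¹ * Sᵀ) *ᵥ x)) = -(x ⬝ᵥ (S * R⁻¹ * Sᵀ) *ᵥ x) := by
    rw [mulVec_neg, dotProduct_neg, mulVec_mulVec, Matrix.mul_assoc]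
  have h3 : (-((R⁻¹ * Sᵀ) *ᵥ x)) ⬝ᵥ R *ᵥ (-((R⁻¹ * Sᵀ) *ᵥ x)) = x ⬝ᵥ (S * R⁻¹ * Sᵀ) *ᵥ x := by
    rw [mulVec_neg, dotProduct_neg, neg_dotProduct, neg_neg]
    rw [mulVec_mulVec, Matrix.mul_nonsing_inv_cancel_left _ _ hdet]
    rw [← vecMul_transpose, ← dotProduct_mulVec, hMt, mulVec_mulVec]
  have hpsd := hΔ.dotProduct_mulVec_nonneg x
  rw [star_trivial, sub_mulVec, sub_mulVec, dotProduct_sub, dotProduct_sub,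
    smul_mulVec, one_mulVec, dotProduct_smul, smul_eq_mul] at hpsd
  rw [h2, h3]
  linarith

private lemma cont_mulVec' {X : Type*} [TopologicalSpace X] {k l : ℕ}
    {A : X → Matrix (Fin k) (Fin l) ℝ} {v : X → Fin l → ℝ}
    (hA : Continuous fun x i j => A x i j) (hv : Continuous v) :
    Continuous fun x => A x *ᵥ v x := by
  refine continuous_pi fun i => ?_
  simp only [Matrix.mulVec, dotProduct]
  exact continuous_finset_sum _ fun j _ =>
    ((continuous_apply j).comp ((continuous_apply i).comp hA)).mul
      ((continuous_apply j).comp hv)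

/-- under the hypotheses of the stability theorem, with in addition
`Δ(x) ⪰ εI` for some `ε > 0`, every solution of the closed loop
`ẋ = f(x) + g(x)π(x)` satisfies
`V(x(t)) ≤ V(x(0)) − ε∫₀ᵗ ‖x(s)‖² ds` and `‖x(t)‖² ≤ (ν/μ)‖x(0)‖²`
for all `t ≥ 0`. -/
theorem stmt7 {n m : ℕ}
    (f : (Fin n → ℝ) → (Fin n → ℝ))
    (g : (Fin n → ℝ) → Matrix (Fin n) (Fin m) ℝ)
    (hf : LocallyLipschitz f) (hg : LocallyLipschitz fun x i j => g x i j)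
    (V : (Fin n → ℝ) → ℝ) (hV : ContDiff ℝ 1 V)
    (μ ν : ℝ) (hμ : 0 < μ) (hμν : μ ≤ ν)
    (hVbound : ∀ x : Fin n → ℝ, μ * (x ⬝ᵥ x) ≤ V x ∧ V x ≤ ν * (x ⬝ᵥ x))
    (Q : (Fin n → ℝ) → Matrix (Fin n) (Fin n) ℝ)
    (hQc : Continuous fun x i j => Q x i j)
    (S : (Fin n → ℝ) → Matrix (Fin n) (Fin m) ℝ)
    (hSc : Continuous fun x i j => S x i j)
    (R : (Fin n → ℝ) → Matrix (Fin m) (Fin m) ℝ)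
    (hRc : Continuous fun x i j => R x i j)
    (hR : ∀ x, (R x).PosDef)
    (hdissi : ∀ (x : Fin n → ℝ) (u : Fin m → ℝ),
      fderiv ℝ V x (f x + g x *ᵥ u) ≤
        x ⬝ᵥ (Q x) *ᵥ x + 2 * (x ⬝ᵥ (S x) *ᵥ u) + u ⬝ᵥ (R x) *ᵥ u)
    (ε : ℝ) (hε : 0 < ε)
    (hΔ : ∀ x, (S x * (R x)⁻¹ * (S x)ᵀ - Q x - ε • (1 : Matrix (Fin n) (Fin n) ℝ)).PosSemidef)
    (π : (Fin n → ℝ) → (Fin m → ℝ))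
    (hπ : ∀ x, π x = -(((R x)⁻¹ * (S x)ᵀ) *ᵥ x))
    (sol : ℝ → (Fin n → ℝ))
    (hsol : ∀ t : ℝ, 0 ≤ t →
      HasDerivAt sol (f (sol t) + g (sol t) *ᵥ π (sol t)) t) :
    ∀ t : ℝ, 0 ≤ t →
      V (sol t) ≤ V (sol 0) - ε * ∫ s in (0 : ℝ)..t, (sol s ⬝ᵥ sol s) ∧
      sol t ⬝ᵥ sol t ≤ (ν / μ) * (sol 0 ⬝ᵥ sol 0) := by
  -- key pointwise decrease
  have key : ∀ x : Fin n → ℝ, fderiv ℝ V x (f x + g x *ᵥ π x) ≤ -ε * (x ⬝ᵥ x) := by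
    intro x
    refine le_trans (hdissi x (π x)) ?_
    rw [hπ x]
    exact key_ineq' (Q x) (S x) (R x) (hR x) ε (hΔ x) x
  -- continuity of the closed-loop vector field
  have hRm : Continuous fun x => R x := hRc
  have hRinvc : Continuous fun x => (R x)⁻¹ := by
    have hd : Continuous fun x => (R x).det := hRm.matrix_det
    have hdne : ∀ x, (R x).det ≠ 0 := fun x => (hR x).det_pos.ne'
    have hadj : Continuous fun x => (R x).adjugate := hRm.matrix_adjugate
    have : Continuous fun x => (R x).det⁻¹ • (R x).adjugate := (hd.inv₀ hdne).smul hadj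
    convert this using 2 with x
    rw [Matrix.inv_def, Ring.inverse_eq_inv]
  have hπc : Continuous π := by
    have : Continuous fun x => -(((R x)⁻¹ * (S x)ᵀ) *ᵥ x) := by
      exact (cont_mulVec' (hRinvc.matrix_mul (Continuous.matrix_transpose hSc)) continuous_id).neg
    convert this using 1
    funext x; exact hπ x
  have hvelc : Continuous fun x => f x + g x *ᵥ π x :=
    hf.continuous.add (cont_mulVec' hg.continuous hπc)
  have hdot : Continuous fun y : Fin n → ℝ => y ⬝ᵥ y := by
    simp only [dotProduct]
    exact continuous_finset_sum _ fun i _ => (continuous_apply i).mul (continuous_apply i)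
  intro t ht
  have hsolc : ContinuousOn sol (Set.Icc 0 t) := fun s hs =>
    ((hsol s hs.1).continuousAt).continuousWithinAt
  have hDc : ContinuousOn (fun s => fderiv ℝ V (sol s) (f (sol s) + g (sol s) *ᵥ π (sol s)))
      (Set.Icc 0 t) :=
    (((hV.continuous_fderiv one_ne_zero).comp_continuousOn hsolc)).clm_apply
      (hvelc.comp_continuousOn hsolc)
  have hx2c : ContinuousOn (fun s => sol s ⬝ᵥ sol s) (Set.Icc 0 t) :=
    hdot.comp_continuousOn hsolc
  have hDint : IntervalIntegrable
      (fun s => fderiv ℝ V (sol s) (f (sol s) + g (sol s) *ᵥ π (sol s))) volume 0 t := by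
    apply ContinuousOn.intervalIntegrable; rwa [Set.uIcc_of_le ht]
  have hx2int : IntervalIntegrable (fun s => sol s ⬝ᵥ sol s) volume 0 t := by
    apply ContinuousOn.intervalIntegrable; rwa [Set.uIcc_of_le ht]
  have heq : (∫ s in (0:ℝ)..t, fderiv ℝ V (sol s) (f (sol s) + g (sol s) *ᵥ π (sol s)))
      = V (sol t) - V (sol 0) := by
    have := intervalIntegral.integral_eq_sub_of_hasDerivAt (a := 0) (b := t)
      (f := fun s => V (sol s))
      (f' := fun s => fderiv ℝ V (sol s) (f (sol s) + g (sol s) *ᵥ π (sol s)))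
      (fun s hs => by
        rw [Set.uIcc_of_le ht] at hs
        exact HasFDerivAt.comp_hasDerivAt s
          ((hV.differentiable one_ne_zero) (sol s)).hasFDerivAt (hsol s hs.1)) hDint
    simpa using this
  have hmono : (∫ s in (0:ℝ)..t, fderiv ℝ V (sol s) (f (sol s) + g (sol s) *ᵥ π (sol s)))
      ≤ ∫ s in (0:ℝ)..t, -ε * (sol s ⬝ᵥ sol s) := by
    refine intervalIntegral.integral_mono_on ht hDint (hx2int.const_mul _) fun s _ => key (sol s)
  rw [intervalIntegral.integral_const_mul] at hmono
  have hfirst : V (sol t) ≤ V (sol 0) - ε * ∫ s in (0:ℝ)..t, (sol s ⬝ᵥ sol s) := by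
    rw [heq] at hmono; linarith
  refine ⟨hfirst, ?_⟩
  have hintnn : 0 ≤ ∫ s in (0:ℝ)..t, (sol s ⬝ᵥ sol s) :=
    intervalIntegral.integral_nonneg ht fun s _ =>
      Finset.sum_nonneg fun i _ => mul_self_nonneg _
  have h1 := (hVbound (sol t)).1
  have h2 := (hVbound (sol 0)).2
  rw [div_mul_eq_mul_div, le_div_iff₀ hμ]
  nlinarith
end

section
/- Suppose V : ℝⁿ → ℝ is C¹, V(x) > 0 for x ≠ 0, V(0) = 0, Y : ℝⁿ → ℝᵐˣⁿ defines a feedback u(x) = Y(x)x with ∇V(x)ᵀ(f(x) + g(x)Y(x)x) < 0 for x ≠ 0, and ∇V(x) = M̄(x)x for some matrix function M̄. Fix a scalar function β(x) > 0 and set R(x) := β(x)⁻¹I, K(x) := Y(x) − (β(x)/4)M̄(x), S(x) := −K(x)ᵀR(x), Q(x) := S(x)R(x)⁻¹S(x)ᵀ. Then the dissipation inequality ∇V(x)ᵀ(f(x) + g(x)u) ≤ xᵀQ(x)x + 2xᵀS(x)u + uᵀR(x)u holds for all u whenever the auxiliary stability condition ∇V(x)ᵀ(f(x) + g(x)K(x)x)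 + (β(x)/4)∇V(x)ᵀg(x)g(x)ᵀ∇V(x) < 0 holds. -/
open Matrix

/-- necessity direction: if `V` is a Lyapunov function for the
feedback `u = Y(x)x`, `∇V(x) = M̄(x)x`, and for `β(x) > 0` we set
`R(x) = β(x)⁻¹ I`, `K(x) = Y(x) − (β(x)/4)M̄(x)`, `S(x) = −K(x)ᵀR(x)`,
`Q(x) = S(x)R(x)⁻¹S(x)ᵀ`, then the dissipation inequality
`∇V(x)ᵀ(f(x) + g(x)u) ≤ xᵀQ(x)x + 2xᵀS(x)u + uᵀR(x)u` holds for all `u`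
whenever `∇V(x)ᵀ(f(x) + g(x)K(x)x) + (β(x)/4)∇V(x)ᵀg(x)g(x)ᵀ∇V(x) < 0`. -/
theorem stmt14 {n : ℕ}
    (f : (Fin n → ℝ) → (Fin n → ℝ))
    (g : (Fin n → ℝ) → Matrix (Fin n) (Fin n) ℝ)
    (V : (Fin n → ℝ) → ℝ) (hV : ContDiff ℝ 1 V)
    (hVpos : ∀ x : Fin n → ℝ, x ≠ 0 → 0 < V x) (hV0 : V 0 = 0)
    (gradV : (Fin n → ℝ) → (Fin n → ℝ))
    (hgrad : ∀ x y : Fin n → ℝ, fderiv ℝ V x y = gradV x ⬝ᵥ y)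
    (Y : (Fin n → ℝ) → Matrix (Fin n) (Fin n) ℝ)
    (hstab : ∀ x : Fin n → ℝ, x ≠ 0 →
      gradV x ⬝ᵥ (f x + g x *ᵥ (Y x *ᵥ x)) < 0)
    (Mbar : (Fin n → ℝ) → Matrix (Fin n) (Fin n) ℝ)
    (hMbar : ∀ x, gradV x = Mbar x *ᵥ x)
    (β : (Fin n → ℝ) → ℝ) (hβ : ∀ x, 0 < β x)
    (R : (Fin n → ℝ) → Matrix (Fin n) (Fin n) ℝ)
    (hR : ∀ x, R x = (β x)⁻¹ • (1 : Matrix (Fin n) (Fin n) ℝ))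
    (K : (Fin n → ℝ) → Matrix (Fin n) (Fin n) ℝ)
    (hK : ∀ x, K x = Y x - (β x / 4) • Mbar x)
    (S : (Fin n → ℝ) → Matrix (Fin n) (Fin n) ℝ)
    (hS : ∀ x, S x = -((K x)ᵀ * R x))
    (Q : (Fin n → ℝ) → Matrix (Fin n) (Fin n) ℝ)
    (hQ : ∀ x, Q x = S x * (R x)⁻¹ * (S x)ᵀ) :
    ∀ x : Fin n → ℝ,
      gradV x ⬝ᵥ (f x + g x *ᵥ (K x *ᵥ x)) +
          (β x / 4) * (gradV x ⬝ᵥ (g x *ᵥ ((g x)ᵀ *ᵥ gradV x))) < 0 →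
      ∀ u : Fin n → ℝ,
        gradV x ⬝ᵥ (f x + g x *ᵥ u) ≤
          x ⬝ᵥ (Q x) *ᵥ x + 2 * (x ⬝ᵥ (S x) *ᵥ u) + u ⬝ᵥ (R x) *ᵥ u := by

  intro x hx u
  have hβx := hβ x
  have hβne : (β x) ≠ 0 := ne_of_gt hβx
  set a := gradV x with ha
  set G := g x with hG
  set b := Gᵀ *ᵥ a with hb
  set k := K x *ᵥ x with hk
  have hRinv : (R x)⁻¹ = (β x) • (1 : Matrix (Fin n) (Fin n) ℝ) := by
    refine Matrix.inv_eq_right_inv ?_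
    rw [hR x, Matrix.smul_mul, Matrix.mul_smul, smul_smul, inv_mul_cancel₀ hβne,
      one_smul, Matrix.mul_one]
  have hSx : S x = -((β x)⁻¹ • (K x)ᵀ) := by
    rw [hS x, hR x, Matrix.mul_smul, Matrix.mul_one]
  have hQx : Q x = (β x)⁻¹ • ((K x)ᵀ * K x) := by
    rw [hQ x, hSx, hRinv]
    simp only [Matrix.transpose_neg, Matrix.transpose_smul, Matrix.transpose_transpose,
      Matrix.neg_mul, Matrix.mul_neg, neg_neg, Matrix.smul_mul, Matrix.mul_smul,
      smul_smul, Matrix.mul_one]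
    congr 1
    field_simp
    simp only [one_smul, neg_neg]
  have hdot1 : ∀ v : Fin n → ℝ, a ⬝ᵥ (G *ᵥ v) = b ⬝ᵥ v := by
    intro v
    rw [Matrix.dotProduct_mulVec, hb, Matrix.mulVec_transpose]
  have hdot2 : ∀ v : Fin n → ℝ, x ⬝ᵥ ((K x)ᵀ *ᵥ v) = k ⬝ᵥ v := by
    intro v
    rw [Matrix.dotProduct_mulVec, Matrix.vecMul_transpose, hk]
  have hF1 : x ⬝ᵥ (Q x) *ᵥ x = (β x)⁻¹ * (k ⬝ᵥ k) := by
    rw [hQx, Matrix.smul_mulVec, dotProduct_smul, ← Matrix.mulVec_mulVec,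
      hdot2, smul_eq_mul]
  have hF2 : x ⬝ᵥ (S x) *ᵥ u = -((β x)⁻¹ * (k ⬝ᵥ u)) := by
    rw [hSx, Matrix.neg_mulVec, dotProduct_neg, Matrix.smul_mulVec,
      dotProduct_smul, hdot2, smul_eq_mul]
  have hF3 : u ⬝ᵥ (R x) *ᵥ u = (β x)⁻¹ * (u ⬝ᵥ u) := by
    rw [hR x, Matrix.smul_mulVec, dotProduct_smul, Matrix.one_mulVec,
      smul_eq_mul]
  rw [dotProduct_add, hdot1, hdot1] at hx
  rw [dotProduct_add, hdot1, hF1, hF2, hF3]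
  have core : ∀ w : Fin n → ℝ, b ⬝ᵥ w ≤ (β x)⁻¹ * (w ⬝ᵥ w) + (β x / 4) * (b ⬝ᵥ b) := by
    intro w
    simp only [dotProduct, Finset.mul_sum, ← Finset.sum_add_distrib]
    apply Finset.sum_le_sum
    intro i _
    have hh : β x * (b i * w i) ≤
        β x * ((β x)⁻¹ * (w i * w i) + β x / 4 * (b i * b i)) := by
      have h1 : β x * ((β x)⁻¹ * (w i * w i)) = w i * w i := by
        field_simp
      rw [mul_add, h1]
      nlinarith [sq_nonneg (w i - (β x / 2) * b i)]
    exact le_of_mul_le_mul_left hh hβx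
  have key := core (u - k)
  have he1 : b ⬝ᵥ (u - k) = b ⬝ᵥ u - b ⬝ᵥ k := by
    rw [dotProduct_sub]
  have he2 : (u - k) ⬝ᵥ (u - k) = u ⬝ᵥ u - k ⬝ᵥ u - k ⬝ᵥ u + k ⬝ᵥ k := by
    rw [dotProduct_sub, sub_dotProduct, sub_dotProduct,
      dotProduct_comm u k]
    ring
  rw [he1, he2] at key
  nlinarith [key, hx]
end
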